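/- arXiv:1012.0545 — 3 statements merged into one kernel-verified Lean document; each statement's English description precedes it below -/
import Mathlib

section
/- The functions 1, cos t, sin t, and sin(2t)·(2 − a₁·cos t − a₂·sin t) on ℝ are linearly independent over ℝ, for any real constants a₁, a₂ with a₁² + a₂² < 1. -/
/-!
The fourth function carries the factor `sin (2 t)`, which vanishes at `0`, `π / 2` and `π`;
evaluating a vanishing combination there kills the coefficients of `1`, `cos` and `sin`.
At `π / 4` the factor `sin (2 t)` is `1` and `2 - a₁ cos t - a₂ sin t` is positive, because
`a₁ cos t + a₂ sin t ≤ √(a₁² + a₂²) < 2` by Cauchy–Schwarz.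
-/

open Real

lemma linearIndependent_one_cos_sin_of_vanishing {f : ℝ → ℝ} (h₀ : f 0 = 0)
    (h_pi : f π = 0) (h_half : f (π / 2) = 0) (h_quarter : f (π / 4) ≠ 0) :
    LinearIndependent ℝ ![fun _ : ℝ => (1 : ℝ), cos, sin, f] := by
  rw [Fintype.linearIndependent_iff]
  intro c hc
  have hc_at (t : ℝ) : c 0 + c 1 * cos t + c 2 * sin t + c 3 * f t = 0 := by
    simpa [Fin.sum_univ_four] using congrFun hc t
  have e₀ := hc_at 0
  have e_pi := hc_at π
  have e_half := hc_at (π / 2)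
  have e_quarter := hc_at (π / 4)
  simp only [cos_zero, sin_zero, cos_pi, sin_pi, cos_pi_div_two, sin_pi_div_two, h₀,
    h_pi, h_half] at e₀ e_pi e_half
  have c₀ : c 0 = 0 := by linarith
  have c₁ : c 1 = 0 := by linarith
  have c₂ : c 2 = 0 := by linarith
  have c₃ : c 3 = 0 := by
    simpa [c₀, c₁, c₂, h_quarter] using e_quarter
  intro i
  fin_cases i <;> assumption

lemma two_sub_mul_cos_sub_mul_sin_pos {a₁ a₂ : ℝ} (h : a₁ ^ 2 + a₂ ^ 2 < 4) (t : ℝ) :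
    0 < 2 - a₁ * cos t - a₂ * sin t := by
  have cauchy_schwarz : (a₁ * cos t + a₂ * sin t) ^ 2 ≤ a₁ ^ 2 + a₂ ^ 2 := by
    nlinarith [sq_nonneg (a₁ * sin t - a₂ * cos t), sin_sq_add_cos_sq t]
  nlinarith

theorem stmt_0 (a₁ a₂ : ℝ) (h : a₁ ^ 2 + a₂ ^ 2 < 1) :
    LinearIndependent ℝ
      ![(fun _ : ℝ => (1 : ℝ)),
        (fun t : ℝ => Real.cos t),
        (fun t : ℝ => Real.sin t),
        (fun t : ℝ => Real.sin (2 * t) * (2 - a₁ * Real.cos t - a₂ * Real.sin t))] := by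
  have h_pos := two_sub_mul_cos_sub_mul_sin_pos (a₁ := a₁) (a₂ := a₂) (by linarith)
  apply linearIndependent_one_cos_sin_of_vanishing
  · simp
  · simp [sin_two_mul]
  · simp [mul_div_cancel₀]
  · rw [show 2 * (π / 4) = π / 2 by ring, sin_pi_div_two, one_mul]
    exact (h_pos _).ne'
end

section
/- The Lie subalgebra of vector fields on the circle generated (under the bracket [f, g] = f g' − f' g) by the three vector fields ∂ₜ, cos t·∂ₜ, and sin t·∂ₜ, together with cos 2t·∂ₜ and sin 2t·∂ₜ, contains cos(nt)·∂ₜ and sin(nt)·∂ₜ for every natural number n. -/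
/-!
Bracketing `cos t` and `sin t` with `cos ct` and `sin ct` and combining gives
`[cos, cos c·] - [sin, sin c·] = (1 - c) sin (c + 1)t` and
`[cos, sin c·] + [sin, cos c·] = (c - 1) cos (c + 1)t`.
For `c ≠ 1` this climbs from frequency `c` to `c + 1`, so starting from frequency `2` every
frequency is reached; frequencies `0` and `1` are among the generators.
-/

open Real

noncomputable def vectorFieldBracket (f g : ℝ → ℝ) : ℝ → ℝ :=
  fun t => f t * deriv g t - deriv f t * g t

lemma deriv_cos_const_mul (c : ℝ) : deriv (fun t => cos (c * t)) = fun t => -c * sin (c * t) := by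
  funext t
  rw [((hasDerivAt_id' t).const_mul c).cos.deriv]
  ring

lemma deriv_sin_const_mul (c : ℝ) : deriv (fun t => sin (c * t)) = fun t => c * cos (c * t) := by
  funext t
  rw [((hasDerivAt_id' t).const_mul c).sin.deriv]
  ring

lemma vectorFieldBracket_cos_cos_sub_sin_sin (c : ℝ) :
    vectorFieldBracket cos (fun t => cos (c * t)) - vectorFieldBracket sin (fun t => sin (c * t))
      = (1 - c) • fun t => sin ((c + 1) * t) := by
  funext t
  simp only [vectorFieldBracket, deriv_cos_const_mul, deriv_sin_const_mul, Real.deriv_cos',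
    Real.deriv_sin, Pi.sub_apply, Pi.smul_apply, smul_eq_mul, add_mul, one_mul, sin_add]
  ring

lemma vectorFieldBracket_cos_sin_add_sin_cos (c : ℝ) :
    vectorFieldBracket cos (fun t => sin (c * t)) + vectorFieldBracket sin (fun t => cos (c * t))
      = (c - 1) • fun t => cos ((c + 1) * t) := by
  funext t
  simp only [vectorFieldBracket, deriv_cos_const_mul, deriv_sin_const_mul, Real.deriv_cos',
    Real.deriv_sin, Pi.add_apply, Pi.smul_apply, smul_eq_mul, add_mul, one_mul, cos_add]
  ring

section

variable {W : Submodule ℝ (ℝ → ℝ)}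
  (hW : ∀ f ∈ W, ∀ g ∈ W, vectorFieldBracket f g ∈ W) (hc : cos ∈ W) (hs : sin ∈ W)
include hW hc hs

lemma cos_succ_mul_mem {c : ℝ} (hc1 : c ≠ 1) (hck : (fun t => cos (c * t)) ∈ W)
    (hsk : (fun t => sin (c * t)) ∈ W) : (fun t => cos ((c + 1) * t)) ∈ W := by
  have hmem := W.add_mem (hW _ hc _ hsk) (hW _ hs _ hck)
  rw [vectorFieldBracket_cos_sin_add_sin_cos] at hmem
  exact (W.smul_mem_iff (sub_ne_zero.mpr hc1)).mp hmem

lemma sin_succ_mul_mem {c : ℝ} (hc1 : c ≠ 1) (hck : (fun t => cos (c * t)) ∈ W)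
    (hsk : (fun t => sin (c * t)) ∈ W) : (fun t => sin ((c + 1) * t)) ∈ W := by
  have hmem := W.sub_mem (hW _ hc _ hck) (hW _ hs _ hsk)
  rw [vectorFieldBracket_cos_cos_sub_sin_sin] at hmem
  exact (W.smul_mem_iff (sub_ne_zero.mpr hc1.symm)).mp hmem

lemma cos_sin_nat_mul_mem_of_two_le (hc2 : (fun t => cos (2 * t)) ∈ W)
    (hs2 : (fun t => sin (2 * t)) ∈ W) {n : ℕ} (hn : 2 ≤ n) :
    (fun t => cos (n * t)) ∈ W ∧ (fun t => sin (n * t)) ∈ W := by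
  induction n, hn using Nat.le_induction with
  | base => exact ⟨by exact_mod_cast hc2, by exact_mod_cast hs2⟩
  | succ k hk ih =>
    have hk1 : (k : ℝ) ≠ 1 := by exact_mod_cast (by omega : k ≠ 1)
    push_cast
    exact ⟨cos_succ_mul_mem hW hc hs hk1 ih.1 ih.2, sin_succ_mul_mem hW hc hs hk1 ih.1 ih.2⟩

end

theorem stmt_4 (W : Submodule ℝ (ℝ → ℝ))
    (hbr : ∀ f ∈ W, ∀ g ∈ W, (fun t : ℝ => f t * deriv g t - deriv f t * g t) ∈ W)
    (h0 : (fun _ : ℝ => (1 : ℝ)) ∈ W)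
    (hc : (fun t : ℝ => Real.cos t) ∈ W)
    (hs : (fun t : ℝ => Real.sin t) ∈ W)
    (hc2 : (fun t : ℝ => Real.cos (2 * t)) ∈ W)
    (hs2 : (fun t : ℝ => Real.sin (2 * t)) ∈ W) :
    ∀ n : ℕ, (fun t : ℝ => Real.cos (n * t)) ∈ W ∧ (fun t : ℝ => Real.sin (n * t)) ∈ W := by
  intro n
  match n with
  | 0 => simpa using ⟨h0, W.zero_mem⟩
  | 1 => simpa using ⟨hc, hs⟩
  | n + 2 => exact cos_sin_nat_mul_mem_of_two_le hbr hc hs hc2 hs2 (by omega)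
end

section
/- Writing cos t = y¹/|y|, sin t = y²/|y|, the four functions of t given by 1, (cos t − a¹), (sin t − a²), and cos t·sin t·(1 − a¹cos t − a²sin t) + (cos t − a¹)(sin t − a²) are linearly independent over ℝ, for any a = (a¹,a²) ∈ ℝ² with |a| < 1. -/
/-! Modulo `1`, `cos` and `sin`, the fourth function is `cos t sin t (2 - a¹ cos t - a² sin t)`.
Since `cos t sin t` vanishes at `0, π, ±π/2`, evaluating a linear relation there kills the
coefficients of `1, cos, sin`; at `π/4` the weight `2 - a¹ cos t - a² sin t` is positive because
`|a¹ cos t + a² sin t| ≤ |a| < 1`. -/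

open Real

lemma linearIndependent_one_cos_sin_cos_mul_sin_mul {w : ℝ → ℝ} (hw : w (π / 4) ≠ 0) :
    LinearIndependent ℝ ![fun _ => 1, cos, sin, fun t => cos t * sin t * w t] := by
  rw [Fintype.linearIndependent_iff]
  intro c hc
  have hc' (t : ℝ) : c 0 + c 1 * cos t + c 2 * sin t + c 3 * (cos t * sin t * w t) = 0 := by
    simpa [Fin.sum_univ_four] using congrFun hc t
  have h0 := hc' 0
  have hπ := hc' π
  have hπ2 := hc' (π / 2)
  have hπ2' := hc' (-(π / 2))
  simp only [cos_zero, sin_zero, cos_pi, sin_pi, cos_pi_div_two, sin_pi_div_two, cos_neg, sin_neg]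
    at h0 hπ hπ2 hπ2'
  have hc0 : c 0 = 0 := by linarith
  have hc1 : c 1 = 0 := by linarith
  have hc2 : c 2 = 0 := by linarith
  have hc3 : c 3 = 0 := by
    have hπ4 := hc' (π / 4)
    rw [hc0, hc1, hc2, cos_pi_div_four, sin_pi_div_four] at hπ4
    have hs : √2 / 2 * (√2 / 2) = 1 / 2 := by
      rw [div_mul_div_comm, mul_self_sqrt zero_le_two]; norm_num
    rw [hs] at hπ4
    simpa [hw] using hπ4
  intro i
  fin_cases i <;> assumption

lemma mul_cos_add_mul_sin_lt_one {a b : ℝ} (hab : a ^ 2 + b ^ 2 < 1) (t : ℝ) :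
    a * cos t + b * sin t < 1 := by
  have h : (a * cos t + b * sin t) ^ 2 + (a * sin t - b * cos t) ^ 2 = a ^ 2 + b ^ 2 := by
    linear_combination (a ^ 2 + b ^ 2) * sin_sq_add_cos_sq t
  nlinarith [sq_nonneg (a * sin t - b * cos t)]

theorem stmt_8 (a : ℝ × ℝ) (ha : Real.sqrt (a.1 ^ 2 + a.2 ^ 2) < 1) :
    LinearIndependent ℝ
      ![(fun _ : ℝ => (1 : ℝ)),
        (fun t : ℝ => Real.cos t - a.1),
        (fun t : ℝ => Real.sin t - a.2),
        (fun t : ℝ => Real.cos t * Real.sin t * (1 - a.1 * Real.cos t - a.2 * Real.sin t)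
          + (Real.cos t - a.1) * (Real.sin t - a.2))] := by
  have hw : 2 - a.1 * cos (π / 4) - a.2 * sin (π / 4) ≠ 0 := by
    have := mul_cos_add_mul_sin_lt_one (by simpa using (sqrt_lt' one_pos).mp ha) (π / 4)
    linarith
  have hind := Fintype.linearIndependent_iff.mp
    (linearIndependent_one_cos_sin_cos_mul_sin_mul (w := fun t => 2 - a.1 * cos t - a.2 * sin t) hw)
  rw [Fintype.linearIndependent_iff]
  intro g hg
  -- The fourth function equals
  -- `cos t sin t (2 - a¹ cos t - a² sin t) - a² (cos t - a¹) - a¹ (sin t - a²) - a¹ a²`.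
  have h := hind
    ![g 0 - a.1 * g 1 - a.2 * g 2 + a.1 * a.2 * g 3, g 1 - a.2 * g 3, g 2 - a.1 * g 3, g 3]
    (funext fun t => by
      have ht := congrFun hg t
      simp only [Fin.sum_univ_four, Finset.sum_apply, Pi.smul_apply, smul_eq_mul, Pi.zero_apply,
        Matrix.cons_val] at ht ⊢
      linear_combination ht)
  have hg3 : g 3 = 0 := h 3
  have hg1 : g 1 = 0 := by simpa [hg3] using h 1
  have hg2 : g 2 = 0 := by simpa [hg3] using h 2
  have hg0 : g 0 = 0 := by simpa [hg1, hg2, hg3] using h 0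
  intro i
  fin_cases i <;> assumption
end
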